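/- arXiv:2308.14779 — 3 statements merged into one kernel-verified Lean document; each statement's English description precedes it below -/
import Mathlib

section
/- Let ρ ≤ λ be infinite cardinals. There exists f : λ → ρ with ds(f) ≥ m(ρ, λ); consequently DS(ρ, λ) ≥ m(ρ, λ). -/
open Cardinal

noncomputable section

/-- The covering number `cov(ρ₁, ρ₂, ρ₃, ρ₄)`: least cardinality of `X ⊆ P_{ρ₂}(ρ₁)`
such that every `b ∈ P_{ρ₃}(ρ₁)` is covered by the union of fewer than `ρ₄` members of `X`. -/
def cov (r1 r2 r3 r4 : Cardinal) : Cardinal :=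
  sInf { c | ∃ X : Set (Set r1.out),
    (∀ x ∈ X, #x < r2) ∧
    (∀ b : Set r1.out, #b < r3 → ∃ Q : Set (Set r1.out), Q ⊆ X ∧ #Q < r4 ∧ b ⊆ ⋃₀ Q) ∧
    #X = c }

/-- The meeting number `m(ρ, λ)`. -/
def meet (ρ lam : Cardinal) : Cardinal :=
  sInf { c | ∃ Q : Set (Set lam.out),
    (∀ q ∈ Q, #q = ρ) ∧
    (∀ b : Set lam.out, #b = ρ → ∃ q ∈ Q, #(↥(b ∩ q)) = ρ) ∧
    #Q = c }

/-- The density number `d(ρ, λ)`. -/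
def dens (ρ lam : Cardinal) : Cardinal :=
  sInf { c | ∃ Q : Set (Set lam.out),
    (∀ q ∈ Q, #q = ρ) ∧
    (∀ b : Set lam.out, #b = ρ → ∃ q ∈ Q, q ⊆ b) ∧
    #Q = c }

/-- `ds(f)` for `f : λ → ρ`. -/
def ds (ρ lam : Cardinal) (f : lam.out → ρ.out) : Cardinal :=
  sInf { c | ∃ Z : Set (Set lam.out),
    (∀ z ∈ Z, #z = ρ) ∧
    (∀ B : Set lam.out, (∀ α : ρ.out, #(↥(B ∩ f ⁻¹' {α})) = lam) →
      ∃ z ∈ Z, #(↥(f '' (z ∩ B))) = ρ) ∧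
    #Z = c }

/-- The Džamonja–Shelah number `DS(ρ, λ) = sup { ds(f) : f : λ → ρ }`. -/
def DS (ρ lam : Cardinal) : Cardinal := ⨆ f : lam.out → ρ.out, ds ρ lam f

/-- Cofinality of a cardinal. -/
def cf (c : Cardinal) : Cardinal := c.ord.cof

/-- `u(σ, λ) = cov(λ, σ, σ, ω)`. -/
def u (σ lam : Cardinal) : Cardinal := cov lam σ σ ℵ₀

/-- The `o`-th iterated cardinal successor of `c`. -/
def succIter (c : Cardinal) (o : Ordinal) : Cardinal :=
  Cardinal.preAleph (Cardinal.preAleph.symm c + o)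

/-!
Write `λ ≃ ρ × λ × λ` and let `f, g : λ → ρ, λ` be the first two coordinates. Given `b ∈ [λ]^ρ`,
enumerate it as `e : ρ ≃ b`; the graph `B = {x | g x = e (f x)}` meets every fibre of `f` in `λ`
points, so a `ds(f)`-family `Z` contains some `z` with `|f''(z ∩ B)| = ρ`. On `B` the map `g`
is `e ∘ f`, hence `g''z` meets `b` in `ρ` points, and `{g''z | z ∈ Z}` is a meeting family.
-/

universe u

section Fibres

variable {X P Y : Type u}

theorem exists_transversal {f : X → P} {B : Set X} (hB : ∀ a, (B ∩ f ⁻¹' {a}).Nonempty) :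
    ∃ z ⊆ B, #z = #P ∧ f '' z = Set.univ := by
  choose s hs using hB
  have hfs : Function.LeftInverse f s := fun a => (hs a).2
  refine ⟨Set.range s, Set.range_subset_iff.2 fun a => (hs a).1, mk_range_eq s hfs.injective, ?_⟩
  rw [← Set.range_comp, hfs.comp_eq_id, Set.range_id]

theorem mk_graph_inter_fiber {W : Type u} (φ : X ≃ P × Y × W) (e : P → Y) (a : P) :
    #({x | (φ x).2.1 = e (φ x).1} ∩ (fun x => (φ x).1) ⁻¹' {a} : Set X) = #W := by
  have hset : ({x | (φ x).2.1 = e (φ x).1} ∩ (fun x => (φ x).1) ⁻¹' {a} : Set X)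
      = φ ⁻¹' ({a} ×ˢ ({e a} ×ˢ Set.univ)) := by
    ext x
    simp only [Set.mem_inter_iff, Set.mem_ofPred_eq, Set.mem_preimage, Set.mem_singleton_iff,
      Set.mem_prod, Set.mem_univ, and_true]
    grind
  rw [hset, mk_preimage_equiv]
  simp [mk_congr (Equiv.Set.prod _ _)]

theorem exists_le_mk_inter_image (f : X → P) (g : X → Y) {ρ κ : Cardinal} (hP : #P = ρ)
    {Z : Set (Set X)}
    (hZ : ∀ B : Set X, (∀ a, #(B ∩ f ⁻¹' {a} : Set X) = κ) → ∃ z ∈ Z, #(f '' (z ∩ B)) = ρ)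
    (hgraph : ∀ (e : P → Y) a, #({x | g x = e (f x)} ∩ f ⁻¹' {a} : Set X) = κ)
    {b : Set Y} (hb : #b = ρ) : ∃ z ∈ Z, ρ ≤ #(b ∩ g '' z : Set Y) := by
  obtain ⟨e⟩ : Nonempty (P ≃ b) := Cardinal.eq.1 (hP.trans hb.symm)
  obtain ⟨z, hzZ, hz⟩ := hZ _ (hgraph (fun a => e a))
  have himg : g '' (z ∩ {x | g x = e (f x)}) =
      (fun a => (e a : Y)) '' (f '' (z ∩ {x | g x = e (f x)})) := by
    rw [Set.image_image]
    exact Set.image_congr fun x hx => hx.2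
  refine ⟨z, hzZ, ?_⟩
  calc ρ = #(g '' (z ∩ {x | g x = e (f x)})) := by
        rw [himg, mk_image_eq (f := fun a => (e a : Y)) (Subtype.val_injective.comp e.injective), hz]
    _ ≤ #(b ∩ g '' z : Set Y) := by
        refine mk_le_mk_of_subset (Set.subset_inter ?_ (Set.image_mono Set.inter_subset_left))
        rw [himg]
        rintro _ ⟨a, -, rfl⟩
        exact (e a).2

end Fibres

theorem meet_le_mk {ρ lam : Cardinal} (Q : Set (Set lam.out)) (hQ : ∀ q ∈ Q, #q ≤ ρ)
    (hmeet : ∀ b : Set lam.out, #b = ρ → ∃ q ∈ Q, ρ ≤ #(b ∩ q : Set lam.out)) :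
    meet ρ lam ≤ #Q := by
  unfold meet
  refine le_trans (csInf_le' ?_) (mk_le_mk_of_subset (Set.sep_subset Q fun q => ρ ≤ #q))
  refine ⟨_, fun q hq => (hQ q hq.1).antisymm hq.2, fun b hb => ?_, rfl⟩
  obtain ⟨q, hqQ, hbq⟩ := hmeet b hb
  have hq : ρ ≤ #q := hbq.trans (mk_le_mk_of_subset Set.inter_subset_right)
  exact ⟨q, ⟨hqQ, hq⟩, (hb ▸ mk_le_mk_of_subset Set.inter_subset_left).antisymm hbq⟩

theorem exists_equiv_prod_prod {ρ lam : Cardinal} (hρ : ℵ₀ ≤ ρ) (hle : ρ ≤ lam) :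
    Nonempty (lam.out ≃ ρ.out × lam.out × lam.out) := by
  have hlam : ℵ₀ ≤ lam := hρ.trans hle
  rw [← Cardinal.eq]
  simp only [mk_prod, lift_id, mk_out]
  rw [mul_eq_self hlam, mul_comm, mul_eq_left hlam hle (aleph0_pos.trans_le hρ).ne']

theorem meet_le_ds_fst {ρ lam : Cardinal} (hlam : lam ≠ 0)
    (φ : lam.out ≃ ρ.out × lam.out × lam.out) : meet ρ lam ≤ ds ρ lam fun x => (φ x).1 := by
  unfold ds
  refine le_csInf ⟨_, {z | #z = ρ}, fun z hz => hz, fun B hB => ?_, rfl⟩ ?_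
  · obtain ⟨z, hzB, hz, hfz⟩ := exists_transversal (B := B) fun α =>
      (mk_ne_zero_iff.1 ((hB α).trans_ne hlam)).elim fun x => ⟨x, x.2⟩
    refine ⟨z, hz.trans (mk_out ρ), ?_⟩
    rw [Set.inter_eq_left.2 hzB, hfz, mk_univ, mk_out]
  · rintro _ ⟨Z, hZρ, hZ, rfl⟩
    let g : lam.out → lam.out := fun x => (φ x).2.1
    calc meet ρ lam ≤ #((g '' ·) '' Z) := by
          refine meet_le_mk _ ?_ fun b hb => ?_
          · rintro _ ⟨z, hz, rfl⟩
            exact mk_image_le.trans (hZρ z hz).le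
          · obtain ⟨z, hz, hbz⟩ := exists_le_mk_inter_image _ g (mk_out ρ) hZ
              (fun e a => (mk_graph_inter_fiber φ e a).trans (mk_out lam)) hb
            exact ⟨g '' z, Set.mem_image_of_mem _ hz, hbz⟩
      _ ≤ #Z := mk_image_le

theorem stmt2 (ρ lam : Cardinal) (hρ : ℵ₀ ≤ ρ) (hle : ρ ≤ lam) :
    (∃ f : lam.out → ρ.out, meet ρ lam ≤ ds ρ lam f) ∧ meet ρ lam ≤ DS ρ lam := by
  obtain ⟨φ⟩ := exists_equiv_prod_prod hρ hle
  have hmeet := meet_le_ds_fst (aleph0_pos.trans_le (hρ.trans hle)).ne' φ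
  exact ⟨⟨_, hmeet⟩, hmeet.trans (le_ciSup bddAbove_of_small _)⟩
end
end

section
/- Let ρ₁ be a limit cardinal and ρ₂, ρ₃, ρ₄ cardinals with ρ₁ > ρ₂ ≥ ρ₃ ≥ ω, ρ₃ ≥ ρ₄ ≥ 2, and cf(ρ₁) ≥ ρ₃. Then cov(ρ₁, ρ₂, ρ₃, ρ₄) = sup { cov(ρ, ρ₂, ρ₃, ρ₄) : ρ₂ ≤ ρ < ρ₁ }. -/
open Cardinal

noncomputable section

/-! Every `ρ` with `r2 < ρ` satisfies `ρ ≤ cov ρ`, since each point is covered and the covering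
sets are small; as `r1` is a limit, the supremum is therefore at least `r1`. Conversely, well-order
`r1` in order type `r1.ord`: a set of size `< r3 ≤ cf r1` is bounded, so it lies in an initial
segment, which has size `< r1`. Gluing optimal covers of the `r1` initial segments gives a cover
of `r1` of size at most `r1 · sup = sup`. -/

open Set

universe u

def IsCover (α : Type u) (r2 r3 r4 : Cardinal.{u}) (X : Set (Set α)) : Prop :=
  (∀ x ∈ X, #x < r2) ∧
  ∀ b : Set α, #b < r3 → ∃ Q ⊆ X, #Q < r4 ∧ b ⊆ ⋃₀ Q

def coverNumber (α : Type u) (r2 r3 r4 : Cardinal.{u}) : Cardinal.{u} :=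
  sInf { c | ∃ X : Set (Set α), IsCover α r2 r3 r4 X ∧ #X = c }

section CoverNumber

variable {α β : Type u} {r2 r3 r4 : Cardinal.{u}}

theorem isCover_setOf_mk_lt (h23 : r3 ≤ r2) (h4 : 2 ≤ r4) :
    IsCover α r2 r3 r4 {x : Set α | #x < r2} := by
  refine ⟨fun x hx => hx, fun b hb => ⟨{b}, ?_, ?_, by simp⟩⟩
  · simpa using hb.trans_le h23
  · simpa using Cardinal.one_lt_two.trans_le h4

theorem exists_isCover_mk_eq_coverNumber (h23 : r3 ≤ r2) (h4 : 2 ≤ r4) :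
    ∃ X : Set (Set α), IsCover α r2 r3 r4 X ∧ #X = coverNumber α r2 r3 r4 :=
  csInf_mem (s := { c | ∃ X : Set (Set α), IsCover α r2 r3 r4 X ∧ #X = c })
    ⟨_, _, isCover_setOf_mk_lt h23 h4, rfl⟩

theorem coverNumber_le_mk {X : Set (Set α)} (hX : IsCover α r2 r3 r4 X) :
    coverNumber α r2 r3 r4 ≤ #X :=
  csInf_le (OrderBot.bddBelow _) ⟨X, hX, rfl⟩

theorem IsCover.preimage (f : α ↪ β) {X : Set (Set β)} (hX : IsCover β r2 r3 r4 X) :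
    IsCover α r2 r3 r4 ((f ⁻¹' ·) '' X) := by
  refine ⟨?_, fun b hb => ?_⟩
  · rintro _ ⟨x, hx, rfl⟩
    exact (mk_preimage_of_injective f x f.injective).trans_lt (hX.1 x hx)
  · obtain ⟨Q, hQX, hQ, hbQ⟩ := hX.2 (f '' b) (mk_image_le.trans_lt hb)
    refine ⟨(f ⁻¹' ·) '' Q, image_mono hQX, mk_image_le.trans_lt hQ, fun a ha => ?_⟩
    obtain ⟨q, hq, hfa⟩ := hbQ (mem_image_of_mem f ha)
    exact ⟨f ⁻¹' q, mem_image_of_mem _ hq, hfa⟩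

theorem coverNumber_le_of_embedding (h23 : r3 ≤ r2) (h4 : 2 ≤ r4) (f : α ↪ β) :
    coverNumber α r2 r3 r4 ≤ coverNumber β r2 r3 r4 := by
  obtain ⟨X, hX, hXcard⟩ := exists_isCover_mk_eq_coverNumber (α := β) h23 h4
  exact (coverNumber_le_mk (hX.preimage f)).trans (mk_image_le.trans hXcard.le)

theorem mk_le_mk_mul_of_isCover (h3 : 1 < r3) {X : Set (Set α)} (hX : IsCover α r2 r3 r4 X) :
    #α ≤ #X * r2 := by
  have hcover : ⋃₀ X = Set.univ := eq_univ_of_forall fun a => by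
    obtain ⟨Q, hQX, -, haQ⟩ := hX.2 {a} (by rwa [mk_singleton])
    exact sUnion_mono hQX (haQ rfl)
  calc #α = #(⋃₀ X) := by rw [hcover, Cardinal.mk_univ]
    _ ≤ #X * ⨆ x : X, #x := mk_sUnion_le X
    _ ≤ #X * r2 := mul_le_mul_right (ciSup_le' fun x => (hX.1 _ x.2).le) _

theorem mk_le_coverNumber (h2 : ℵ₀ ≤ r2) (h3 : 1 < r3) (h23 : r3 ≤ r2) (h4 : 2 ≤ r4)
    (hα : r2 < #α) : #α ≤ coverNumber α r2 r3 r4 := by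
  obtain ⟨X, hX, hXcard⟩ := exists_isCover_mk_eq_coverNumber (α := α) h23 h4
  have hle := (mk_le_mk_mul_of_isCover h3 hX).trans (mul_le_max_of_aleph0_le_right h2)
  rw [← hXcard]
  exact (le_max_iff.1 hle).resolve_right hα.not_ge

theorem exists_subset_Iio_of_mk_lt_cof [LinearOrder α] {s : Set α} (hs : #s < Order.cof α) :
    ∃ i, s ⊆ Iio i :=
  not_isCofinal_iff.1 fun hcof => (Order.cof_le hcof).not_gt hs

theorem IsCover.iUnion_image_val {ι : Type*} {A : ι → Set α} {X : ∀ i, Set (Set (A i))}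
    (hX : ∀ i, IsCover (A i) r2 r3 r4 (X i)) (hA : ∀ b : Set α, #b < r3 → ∃ i, b ⊆ A i) :
    IsCover α r2 r3 r4 (⋃ i, image Subtype.val '' X i) := by
  refine ⟨?_, fun b hb => ?_⟩
  · simp only [mem_iUnion, mem_image]
    rintro _ ⟨i, x, hx, rfl⟩
    rw [mk_image_eq Subtype.val_injective]
    exact (hX i).1 x hx
  · obtain ⟨i, hbA⟩ := hA b hb
    obtain ⟨Q, hQX, hQ, hbQ⟩ := (hX i).2 (Subtype.val ⁻¹' b)
      ((mk_preimage_of_injective _ _ Subtype.val_injective).trans_lt hb)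
    refine ⟨image Subtype.val '' Q, (image_mono hQX).trans (subset_iUnion_of_subset i le_rfl),
      mk_image_le.trans_lt hQ, fun a ha => ?_⟩
    obtain ⟨q, hq, haq⟩ := hbQ (show (⟨a, hbA ha⟩ : A i) ∈ Subtype.val ⁻¹' b from ha)
    exact ⟨_, mem_image_of_mem _ hq, mem_image_of_mem _ haq⟩

theorem coverNumber_le_of_forall_Iio [LinearOrder α] {B : Cardinal.{u}}
    (h23 : r3 ≤ r2) (h4 : 2 ≤ r4) (hcof : r3 ≤ Order.cof α) (hαB : #α ≤ B) (hB : ℵ₀ ≤ B)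
    (hIio : ∀ i : α, coverNumber (Iio i) r2 r3 r4 ≤ B) : coverNumber α r2 r3 r4 ≤ B := by
  choose X hX hXcard using fun i : α => exists_isCover_mk_eq_coverNumber (α := Iio i) h23 h4
  have hY := IsCover.iUnion_image_val hX fun b hb =>
    exists_subset_Iio_of_mk_lt_cof (hb.trans_le hcof)
  calc coverNumber α r2 r3 r4 ≤ #(⋃ i, image Subtype.val '' X i) := coverNumber_le_mk hY
    _ ≤ #α * ⨆ i, #(image Subtype.val '' X i) := mk_iUnion_le _
    _ ≤ B * B :=
      mul_le_mul' hαB (ciSup_le' fun i => mk_image_le.trans ((hXcard i).trans_le (hIio i)))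
    _ = B := mul_eq_self hB

end CoverNumber

section Cov

variable {α : Type u} {ρ r2 r3 r4 : Cardinal.{u}}

theorem cov_eq_coverNumber : cov ρ r2 r3 r4 = coverNumber ρ.out r2 r3 r4 := by
  simp only [cov, coverNumber, IsCover, and_assoc]

theorem coverNumber_le_cov (h23 : r3 ≤ r2) (h4 : 2 ≤ r4) (h : #α ≤ ρ) :
    coverNumber α r2 r3 r4 ≤ cov ρ r2 r3 r4 := by
  rw [← mk_out ρ, le_def] at h
  exact cov_eq_coverNumber ▸ coverNumber_le_of_embedding h23 h4 h.some

theorem cov_le_coverNumber (h23 : r3 ≤ r2) (h4 : 2 ≤ r4) (h : ρ ≤ #α) :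
    cov ρ r2 r3 r4 ≤ coverNumber α r2 r3 r4 := by
  rw [← mk_out ρ, le_def] at h
  exact cov_eq_coverNumber ▸ coverNumber_le_of_embedding h23 h4 h.some

theorem cov_mono {ρ' : Cardinal.{u}} (h23 : r3 ≤ r2) (h4 : 2 ≤ r4) (h : ρ ≤ ρ') :
    cov ρ r2 r3 r4 ≤ cov ρ' r2 r3 r4 :=
  cov_eq_coverNumber (ρ := ρ) ▸ coverNumber_le_cov h23 h4 ((mk_out ρ).trans_le h)

theorem le_cov (h2 : ℵ₀ ≤ r2) (h3 : 1 < r3) (h23 : r3 ≤ r2) (h4 : 2 ≤ r4) (hρ : r2 < ρ) :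
    ρ ≤ cov ρ r2 r3 r4 := by
  rw [cov_eq_coverNumber]
  simpa using mk_le_coverNumber h2 h3 h23 h4 (α := ρ.out) (by rwa [mk_out])

end Cov

theorem stmt12_general (r1 r2 r3 r4 : Cardinal)
    (hlim : ∀ c : Cardinal, c < r1 → Order.succ c < r1)
    (h12 : r2 < r1) (h23 : r3 ≤ r2)
    (h3 : ℵ₀ ≤ r3) (h4 : 2 ≤ r4) (hcf : r3 ≤ cf r1) :
    cov r1 r2 r3 r4 = sSup { c | ∃ ρ, r2 ≤ ρ ∧ ρ < r1 ∧ c = cov ρ r2 r3 r4 } := by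
  set S := { c | ∃ ρ, r2 ≤ ρ ∧ ρ < r1 ∧ c = cov ρ r2 r3 r4 }
  have h2 : ℵ₀ ≤ r2 := h3.trans h23
  have hS_le : ∀ c ∈ S, c ≤ cov r1 r2 r3 r4 := by
    rintro _ ⟨ρ, -, hρ, rfl⟩
    exact cov_mono h23 h4 hρ.le
  have cov_le_sSup : ∀ ρ, r2 ≤ ρ → ρ < r1 → cov ρ r2 r3 r4 ≤ sSup S :=
    fun ρ h2ρ hρ1 => le_csSup ⟨_, hS_le⟩ ⟨ρ, h2ρ, hρ1, rfl⟩
  have hr1 : r1 ≤ sSup S := le_of_forall_lt fun c hc => by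
    have hr2 : r2 < Order.succ (max c r2) := Order.lt_succ_of_le (le_max_right c r2)
    calc c < Order.succ (max c r2) := Order.lt_succ_of_le (le_max_left c r2)
      _ ≤ cov (Order.succ (max c r2)) r2 r3 r4 :=
        le_cov h2 (one_lt_aleph0.trans_le h3) h23 h4 hr2
      _ ≤ sSup S := cov_le_sSup _ hr2.le (hlim _ (max_lt hc h12))
  refine le_antisymm ?_ (csSup_le ⟨_, r2, le_rfl, h12, rfl⟩ hS_le)
  calc cov r1 r2 r3 r4 ≤ coverNumber r1.ord.ToType r2 r3 r4 :=
        cov_le_coverNumber h23 h4 (mk_ord_toType r1).ge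
    _ ≤ sSup S := by
      refine coverNumber_le_of_forall_Iio h23 h4 (hcf.trans (Ordinal.cof_toType _).ge)
        ((mk_ord_toType r1).trans_le hr1) ((h2.trans h12.le).trans hr1) fun i => ?_
      exact (coverNumber_le_cov h23 h4 (le_max_left _ r2)).trans
        (cov_le_sSup _ (le_max_right _ _) (max_lt (by simpa using mk_Iio_lt i (by simp)) h12))

theorem stmt12 (r1 r2 r3 r4 : Cardinal)
    (hlim : ∀ c : Cardinal, c < r1 → Order.succ c < r1)
    (h12 : r2 < r1) (h23 : r3 ≤ r2)
    (h3 : ℵ₀ ≤ r3) (h34 : r4 ≤ r3) (h4 : 2 ≤ r4) (hcf : r3 ≤ cf r1) :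
    cov r1 r2 r3 r4 = sSup { c | ∃ ρ, r2 ≤ ρ ∧ ρ < r1 ∧ c = cov ρ r2 r3 r4 } :=
  stmt12_general r1 r2 r3 r4 hlim h12 h23 h3 h4 hcf
end
end

section
/- Let ρ₂ be a regular cardinal, ρ₃ a cardinal with ω ≤ ρ₃ ≤ ρ₂, ρ₄ a regular infinite cardinal with ρ₄ ≤ ρ₃, and ρ₁ a cardinal with ρ₂ ≤ ρ₁ < ρ₂^{+ρ₄} (the ρ₄-th successor of ρ₂). Then cov(ρ₁, ρ₂, ρ₃, ρ₄) ≤ ρ₁ (hence equals ρ₁ when ρ₁ > ρ₂ or ρ₄ ≤ cf(ρ₁) < ρ₃). -/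
open Cardinal

noncomputable section

/-!
Induction on `#S` below `ρ₂^{+ρ₄}`. A set of size `< ρ₂` covers itself. A set `S` of size
`c ≥ ρ₂` is the increasing union of `c` initial segments of a well-order of type `c`, each of size
`< c`, and the union of their covering families has size `c`. A set `b ⊆ S` with `#b < ρ₃` is then
covered as follows. If `c` is regular, `b` lies in a single segment since `#b < ρ₃ ≤ c = cf c`. If
`c` is singular then `c = ρ₂^{+δ}` with `δ < ρ₄` a limit (`ρ₂` and successor cardinals are regular),
so `cf c = cf δ < ρ₄`: `b` is cut along fewer than `ρ₄` cofinal segments, each piece needing fewer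
than `ρ₄` sets, and `ρ₄` is regular.

Conversely, if `ρ₂ < ρ₁`, fewer than `ρ₁` sets of size `< ρ₂` cannot cover `ρ₁`, while a covering
family must cover every singleton. Finally `ρ₄ ≤ cf ρ₁ < ρ₃` excludes `ρ₁ = ρ₂ = cf ρ₂ ≥ ρ₃`.
-/

universe u

open Set Order

variable {α ι : Type u}

/-- The families counted by `cov`, relativized to a subset `S`. -/
def IsCovFamily (ρ₂ ρ₃ ρ₄ : Cardinal.{u}) (S : Set α) (X : Set (Set α)) : Prop :=
  (∀ x ∈ X, #x < ρ₂) ∧ ∀ b ⊆ S, #b < ρ₃ → ∃ Q ⊆ X, #Q < ρ₄ ∧ b ⊆ ⋃₀ Q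

section IsCovFamily

variable {ρ₂ ρ₃ ρ₄ : Cardinal.{u}} {S : Set α} {X : Set (Set α)}

theorem isCovFamily_singleton (hS : #S < ρ₂) (hρ₄ : 1 < ρ₄) : IsCovFamily ρ₂ ρ₃ ρ₄ S {S} := by
  refine ⟨fun x hx => (mem_singleton_iff.mp hx) ▸ hS, fun b hb _ => ⟨{S}, subset_rfl, ?_, ?_⟩⟩
  · rwa [mk_singleton]
  · simpa using hb

theorem IsCovFamily.subset_sUnion (hX : IsCovFamily ρ₂ ρ₃ ρ₄ S X) (hρ₃ : 1 < ρ₃) : S ⊆ ⋃₀ X := by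
  intro p hp
  obtain ⟨Q, hQX, -, hpQ⟩ := hX.2 {p} (singleton_subset_iff.mpr hp) (by rwa [mk_singleton])
  exact sUnion_mono hQX (hpQ (mem_singleton p))

variable {T : ι → Set α} {F : ι → Set (Set α)}

theorem IsCovFamily.iUnion_of_forall_exists_subset (hF : ∀ i, IsCovFamily ρ₂ ρ₃ ρ₄ (T i) (F i))
    (hS : ∀ b ⊆ S, #b < ρ₃ → ∃ i, b ⊆ T i) : IsCovFamily ρ₂ ρ₃ ρ₄ S (⋃ i, F i) := by
  refine ⟨fun x hx => ?_, fun b hb hb₃ => ?_⟩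
  · obtain ⟨i, hi⟩ := mem_iUnion.mp hx
    exact (hF i).1 x hi
  · obtain ⟨i, hi⟩ := hS b hb hb₃
    obtain ⟨Q, hQ, hQ₄, hbQ⟩ := (hF i).2 b hi hb₃
    exact ⟨Q, hQ.trans (subset_iUnion F i), hQ₄, hbQ⟩

theorem IsCovFamily.iUnion_of_mk_lt (hρ₄ : ρ₄.IsRegular) {A : Set ι} (hA : #A < ρ₄)
    (hF : ∀ i, IsCovFamily ρ₂ ρ₃ ρ₄ (T i) (F i)) (hS : S ⊆ ⋃ a : A, T a) :
    IsCovFamily ρ₂ ρ₃ ρ₄ S (⋃ i, F i) := by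
  refine ⟨fun x hx => ?_, fun b hb hb₃ => ?_⟩
  · obtain ⟨i, hi⟩ := mem_iUnion.mp hx
    exact (hF i).1 x hi
  have hpieces : ∀ a : A, ∃ Q ⊆ F a, #Q < ρ₄ ∧ b ∩ T a ⊆ ⋃₀ Q := fun a =>
    (hF a).2 _ inter_subset_right ((mk_le_mk_of_subset inter_subset_left).trans_lt hb₃)
  choose Q hQF hQ₄ hbQ using hpieces
  refine ⟨⋃ a, Q a, iUnion_subset fun a => (hQF a).trans (subset_iUnion F a), ?_, fun p hp => ?_⟩
  · exact mk_iUnion_le_sum_mk.trans_lt (sum_lt_of_isRegular hρ₄ hA hQ₄)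
  · obtain ⟨a, ha⟩ := mem_iUnion.mp (hS (hb hp))
    obtain ⟨t, ht, hpt⟩ := hbQ a ⟨hp, ha⟩
    exact ⟨t, mem_iUnion.mpr ⟨a, ht⟩, hpt⟩

end IsCovFamily

theorem mk_le_mk_of_subset_sUnion {κ : Cardinal.{u}} {S : Set α} {X : Set (Set α)}
    (hX : ∀ x ∈ X, #x < κ) (hκ : κ < #S) (hS : ℵ₀ ≤ #S) (hSX : S ⊆ ⋃₀ X) : #S ≤ #X := by
  by_contra! hXS
  have hsup : ⨆ s : X, #(s : Set α) < #S := (ciSup_le' fun s : X => (hX s.1 s.2).le).trans_lt hκ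
  exact ((mk_le_mk_of_subset hSX).trans (mk_sUnion_le X)).not_gt (mul_lt_of_lt hS hXS hsup)

section MonotoneFamily

variable {T : ι → Set α}

theorem exists_subset_of_mk_lt_cof [LinearOrder ι] (hT : Monotone T) {b : Set α}
    (hb : b ⊆ ⋃ i, T i) (hbι : #b < Order.cof ι) : ∃ i, b ⊆ T i := by
  choose j hj using fun p : b => mem_iUnion.mp (hb p.2)
  have hbounded : ¬ IsCofinal (range j) := fun h => ((cof_le h).trans mk_range_le).not_gt hbι
  obtain ⟨i, hi⟩ := not_isCofinal_iff.mp hbounded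
  exact ⟨i, fun p hp => hT (hi _ ⟨⟨p, hp⟩, rfl⟩).le (hj ⟨p, hp⟩)⟩

theorem iUnion_subset_iUnion_of_isCofinal [Preorder ι] (hT : Monotone T) {A : Set ι}
    (hA : IsCofinal A) : ⋃ i, T i ⊆ ⋃ a : A, T a :=
  iUnion_subset fun i =>
    let ⟨a, ha, hia⟩ := hA i
    (hT hia).trans (subset_iUnion_of_subset ⟨a, ha⟩ subset_rfl)

end MonotoneFamily

theorem exists_monotone_iUnion_eq {S : Set α} {c : Cardinal.{u}} (hS : #S = c) (hc : ℵ₀ ≤ c) :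
    ∃ T : c.ord.ToType → Set α, Monotone T ∧ ⋃ i, T i = S ∧ ∀ i, #(T i) < c := by
  obtain ⟨e⟩ : Nonempty (c.ord.ToType ≃ S) := Cardinal.eq.mp (by rw [hS, mk_ord_toType])
  refine ⟨fun i => Subtype.val '' (e '' Iic i), fun i j hij => ?_, ?_, fun i => ?_⟩
  · exact image_mono (image_mono (Iic_subset_Iic.mpr hij))
  · ext p
    refine ⟨fun hp => ?_, fun hp => mem_iUnion.mpr ⟨e.symm ⟨p, hp⟩, ?_⟩⟩
    · obtain ⟨i, q, -, rfl⟩ := mem_iUnion.mp hp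
      exact q.2
    · exact ⟨⟨p, hp⟩, ⟨e.symm ⟨p, hp⟩, mem_Iic.mpr le_rfl, e.apply_symm_apply _⟩, rfl⟩
  · calc #(Subtype.val '' (e '' Iic i)) ≤ #(Iic i) := mk_image_le.trans mk_image_le
      _ < c := by simpa using mk_Iic_lt i (by simp) (by simpa using hc)

theorem Cardinal.IsSingular.cof_ord_lt_of_lt_succIter {ρ₂ ρ₄ c : Cardinal} (hρ₂ : ρ₂.IsRegular)
    (hc : c.IsSingular) (hρ₂c : ρ₂ ≤ c) (hc₄ : c < succIter ρ₂ ρ₄.ord) : c.ord.cof < ρ₄ := by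
  obtain ⟨δ, hδ, rfl⟩ : ∃ δ < ρ₄.ord, preAleph (preAleph.symm ρ₂ + δ) = c := by
    have hρ₂c' : preAleph.symm ρ₂ ≤ preAleph.symm c := preAleph.symm.le_iff_le.mpr hρ₂c
    refine ⟨preAleph.symm c - preAleph.symm ρ₂, ?_, ?_⟩
    · rw [← add_lt_add_iff_left (preAleph.symm ρ₂), Ordinal.add_sub_cancel_of_le hρ₂c']
      simpa [succIter] using preAleph.symm.lt_iff_lt.mpr hc₄
    · rw [Ordinal.add_sub_cancel_of_le hρ₂c', OrderIso.apply_symm_apply]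
  rcases Ordinal.zero_or_succ_or_isSuccLimit δ with rfl | ⟨γ, rfl⟩ | hδlim
  · simp only [add_zero, OrderIso.apply_symm_apply] at hc
    exact (hc.not_isRegular hρ₂).elim
  · rw [Order.succ_eq_add_one, ← add_assoc, ← succ_preAleph] at hc
    exact (not_isSingular_succ _ hc).elim
  · rw [ord_preAleph, Ordinal.cof_preOmega (Ordinal.isSuccLimit_add _ hδlim).isSuccPrelimit,
      Ordinal.cof_add _ hδlim.ne_bot]
    exact (Ordinal.cof_le_card δ).trans_lt (lt_ord.mp hδ)

theorem exists_isCovFamily_of_lt_succIter {ρ₂ ρ₃ ρ₄ : Cardinal.{u}} (hρ₂ : ρ₂.IsRegular)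
    (hρ₃ : ρ₃ ≤ ρ₂) (hρ₄ : ρ₄.IsRegular) (c : Cardinal.{u}) (hc : c < succIter ρ₂ ρ₄.ord)
    (S : Set α) (hS : #S = c) : ∃ X, IsCovFamily ρ₂ ρ₃ ρ₄ S X ∧ #X ≤ max c 1 := by
  induction c using WellFoundedLT.induction generalizing S with
  | ind c ih =>
  rcases lt_or_ge c ρ₂ with hcρ₂ | hρ₂c
  · exact ⟨{S}, isCovFamily_singleton (hS ▸ hcρ₂) (by simpa using hρ₄.nat_lt 1), by simp⟩
  have hc₀ : ℵ₀ ≤ c := hρ₂.aleph0_le.trans hρ₂c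
  obtain ⟨T, hT, hTS, hTc⟩ := exists_monotone_iUnion_eq hS hc₀
  choose F hF hFc using fun i => ih _ (hTc i) ((hTc i).trans hc) (T i) rfl
  refine ⟨⋃ i, F i, ?_, ?_⟩
  · rcases isRegular_or_isSingular hc₀ with hreg | hsing
    · refine IsCovFamily.iUnion_of_forall_exists_subset hF fun b hb hb₃ =>
        exists_subset_of_mk_lt_cof hT (hTS ▸ hb) ?_
      rw [Ordinal.cof_toType, hreg.cof_ord]
      exact hb₃.trans_le (hρ₃.trans hρ₂c)
    · obtain ⟨A, hA, hAcof⟩ := exists_cof_eq c.ord.ToType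
      refine IsCovFamily.iUnion_of_mk_lt hρ₄ ?_ hF
        (hTS ▸ iUnion_subset_iUnion_of_isCofinal hT hA)
      rw [hAcof, Ordinal.cof_toType]
      exact hsing.cof_ord_lt_of_lt_succIter hρ₂ hρ₂c hc
  · calc #(⋃ i, F i) ≤ #c.ord.ToType * ⨆ i, #(F i) := mk_iUnion_le F
      _ ≤ c * c := mul_le_mul' (mk_ord_toType c).le
          (ciSup_le' fun i => (hFc i).trans (max_le (hTc i).le (one_le_aleph0.trans hc₀)))
      _ = c := mul_eq_self hc₀
      _ ≤ max c 1 := le_max_left c 1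

section Cov

variable {ρ₁ ρ₂ ρ₃ ρ₄ : Cardinal.{u}}

theorem cov_eq_sInf :
    cov ρ₁ ρ₂ ρ₃ ρ₄ = sInf {c | ∃ X, IsCovFamily ρ₂ ρ₃ ρ₄ (univ : Set ρ₁.out) X ∧ #X = c} := by
  simp only [cov, IsCovFamily, subset_univ, forall_const, and_assoc]

theorem cov_le_mk {X : Set (Set ρ₁.out)}
    (hX : IsCovFamily ρ₂ ρ₃ ρ₄ univ X) : cov ρ₁ ρ₂ ρ₃ ρ₄ ≤ #X := by
  rw [cov_eq_sInf]
  exact csInf_le' (s := {c | _}) ⟨X, hX, rfl⟩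

theorem exists_isCovFamily_mk_eq_cov (h : ∃ X : Set (Set ρ₁.out), IsCovFamily ρ₂ ρ₃ ρ₄ univ X) :
    ∃ X : Set (Set ρ₁.out), IsCovFamily ρ₂ ρ₃ ρ₄ univ X ∧ #X = cov ρ₁ ρ₂ ρ₃ ρ₄ := by
  obtain ⟨X, hX⟩ := h
  have hne : {c | ∃ X : Set (Set ρ₁.out), IsCovFamily ρ₂ ρ₃ ρ₄ univ X ∧ #X = c}.Nonempty :=
    ⟨#X, X, hX, rfl⟩
  rw [cov_eq_sInf]
  exact csInf_mem hne

end Cov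

theorem stmt14_general (r1 r2 r3 r4 : Cardinal) (hreg : cf r2 = r2) (h2 : ℵ₀ ≤ r2)
    (h3 : ℵ₀ ≤ r3) (h32 : r3 ≤ r2) (h4reg : cf r4 = r4) (h4 : ℵ₀ ≤ r4)
    (h21 : r2 ≤ r1) (h1 : r1 < succIter r2 r4.ord) :
    cov r1 r2 r3 r4 ≤ r1 ∧
      ((r2 < r1 ∨ (r4 ≤ cf r1 ∧ cf r1 < r3)) → cov r1 r2 r3 r4 = r1) := by
  have hr1 : #(univ : Set r1.out) = r1 := by simp
  obtain ⟨X, hX, hXr1⟩ := exists_isCovFamily_of_lt_succIter ⟨h2, hreg.ge⟩ h32 ⟨h4, h4reg.ge⟩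
    r1 h1 univ hr1
  have hle : cov r1 r2 r3 r4 ≤ r1 :=
    (cov_le_mk hX).trans (hXr1.trans_eq (max_eq_left (one_le_aleph0.trans (h2.trans h21))))
  refine ⟨hle, fun hcase => hle.antisymm ?_⟩
  have h21' : r2 < r1 := by
    refine h21.lt_of_ne ?_
    rintro rfl
    rcases hcase with h | ⟨-, h⟩
    · exact h.ne rfl
    · exact (h.trans_le h32).ne hreg
  obtain ⟨Y, hY, hYcov⟩ := exists_isCovFamily_mk_eq_cov ⟨X, hX⟩
  calc r1 = #(univ : Set r1.out) := hr1.symm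
    _ ≤ #Y := mk_le_mk_of_subset_sUnion hY.1 (hr1.symm ▸ h21') (hr1.symm ▸ h2.trans h21)
        (hY.subset_sUnion (one_lt_aleph0.trans_le h3))
    _ = cov r1 r2 r3 r4 := hYcov

theorem stmt14 (r1 r2 r3 r4 : Cardinal) (hreg : cf r2 = r2) (h2 : ℵ₀ ≤ r2)
    (h3 : ℵ₀ ≤ r3) (h32 : r3 ≤ r2) (h4reg : cf r4 = r4) (h4 : ℵ₀ ≤ r4) (h43 : r4 ≤ r3)
    (h21 : r2 ≤ r1) (h1 : r1 < succIter r2 r4.ord) :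
    cov r1 r2 r3 r4 ≤ r1 ∧
      ((r2 < r1 ∨ (r4 ≤ cf r1 ∧ cf r1 < r3)) → cov r1 r2 r3 r4 = r1) :=
  stmt14_general r1 r2 r3 r4 hreg h2 h3 h32 h4reg h4 h21 h1
end
end
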